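/- There exist a neighborhood U₁ of 0 in ℝ^N, ε > 0, C > 0, and smooth real-valued functions a_{jk,α} on U₁ — indexed by 1 ≤ j ≤ r, 1 ≤ k ≤ n_j, and multi-indices α on ℝ^Ñ with ordinary degree 1 ≤ |α| ≤ r — such that for every ξ ∈ U₁ and every y ∈ ℝ^Ñ with |y| < ε (non-isotropic norm), the point exp(y·X)ξ lies in the coordinate neighborhood and its coordinates satisfy, for all j, k: |(exp(y·X)ξ)_{jk} − ξ_{jk} − Σ_{1≤|α|≤r} a_{jk,α}(ξ) y^α| ≤ C |y|^{r+1}. -/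

import Mathlib

open MeasureTheory Real Topology

noncomputable section

/-- A (smooth) vector field on (an open subset of) `ℝ^N`, given as a map into `ℝ^N`. -/
abbrev VF (N : ℕ) := (Fin N → ℝ) → (Fin N → ℝ)

/-- Action of a vector field on a function: `(Xφ)(x) = Dφ(x)[X(x)]`. -/
def vfD {N : ℕ} (X : VF N) (φ : (Fin N → ℝ) → ℝ) (x : Fin N → ℝ) : ℝ :=
  fderiv ℝ φ x (X x)

/-- Lie bracket of vector fields: `[X,Y](x) = DY(x)[X(x)] − DX(x)[Y(x)]`. -/
def vfLie {N : ℕ} (X Y : VF N) : VF N :=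
  fun x => fderiv ℝ Y x (X x) - fderiv ℝ X x (Y x)

/-- `IsComm X j W` : `W` is a commutator of the `X k` of length `j`. -/
inductive IsComm {N n : ℕ} (X : Fin n → VF N) : ℕ → VF N → Prop
  | base (k : Fin n) : IsComm X 1 (X k)
  | bracket (k : Fin n) {j : ℕ} {W : VF N} : IsComm X j W → IsComm X (j + 1) (vfLie (X k) W)

/-- `V_j(x)` : the span of the values at `x` of all commutators of length `≤ j`. -/
def Vj {N n : ℕ} (X : Fin n → VF N) (j : ℕ) (x : Fin N → ℝ) : Submodule ℝ (Fin N → ℝ) :=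
  Submodule.span ℝ {v | ∃ j' W, j' ≤ j ∧ IsComm X j' W ∧ W x = v}

/-- `n_j = dim V_j(0) − dim V_{j−1}(0)`. -/
def nDim {N n : ℕ} (X : Fin n → VF N) (j : ℕ) : ℕ :=
  Module.finrank ℝ (Vj X j 0) - Module.finrank ℝ (Vj X (j - 1) 0)

/-- The non-isotropic dimension `Q = Σ_{j=1}^r j n_j` at `0`. -/
def Qdim {N n : ℕ} (X : Fin n → VF N) (r : ℕ) : ℕ :=
  ∑ j ∈ Finset.Icc 1 r, j * nDim X j

/-- `L^p` norm (w.r.t. Lebesgue measure) of a function on `U`. -/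
def lpNorm {N : ℕ} (p : ℝ) (U : Set (Fin N → ℝ)) (f : (Fin N → ℝ) → ℝ) : ℝ :=
  (∫ x in U, |f x| ^ p) ^ (1 / p)

/-- Euclidean length of `∇_b Φ = (X₁Φ, …, XₙΦ)`. -/
def gradB {N n : ℕ} (X : Fin n → VF N) (Φ : (Fin N → ℝ) → ℝ) (x : Fin N → ℝ) : ℝ :=
  Real.sqrt (∑ k, (vfD (X k) Φ x) ^ 2)

/-- `C_c^∞(U)` : smooth real functions compactly supported in `U`. -/
def CcSmooth {ι : Type*} [Fintype ι] (U : Set (ι → ℝ)) (f : (ι → ℝ) → ℝ) : Prop :=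
  ContDiff ℝ (⊤ : ℕ∞) f ∧ HasCompactSupport f ∧ tsupport f ⊆ U


/-- `ExpEq X ξ η` : `η = exp(X)ξ`, the time-1 flow of `X` starting at `ξ`. -/
def ExpEq {N : ℕ} (X : VF N) (ξ η : Fin N → ℝ) : Prop :=
  ∃ γ : ℝ → (Fin N → ℝ), γ 0 = ξ ∧ γ 1 = η ∧
    ∀ t ∈ Set.Icc (0 : ℝ) 1, HasDerivAt γ (X (γ t)) t

/-- Iterated commutator `X_γ` indexed by a list `γ` of indices. -/
def Xgamma {N n : ℕ} (X : Fin n → VF N) : List (Fin n) → VF N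
  | [] => fun _ => 0
  | [k] => X k
  | k :: l :: rest => vfLie (X k) (Xgamma X (l :: rest))

/-- The non-isotropic norm `|y| = max_{j,k} |y_{jk}|^{1/j}`, where coordinate `i` has
weight `w i`. -/
def anorm {ι : Type*} [Fintype ι] (w : ι → ℕ) (y : ι → ℝ) : ℝ :=
  ⨆ i, |y i| ^ ((w i : ℝ)⁻¹)

section helpers

variable {N : ℕ}

lemma contDiff_vfD {Y : VF N} {g : (Fin N → ℝ) → ℝ} (hY : ContDiff ℝ (⊤ : ℕ∞) Y)
    (hg : ContDiff ℝ (⊤ : ℕ∞) g) : ContDiff ℝ (⊤ : ℕ∞) (vfD Y g) :=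
  (hg.fderiv_right (by simp)).clm_apply hY

lemma contDiff_vfLie {X Y : VF N} (hX : ContDiff ℝ (⊤ : ℕ∞) X) (hY : ContDiff ℝ (⊤ : ℕ∞) Y) :
    ContDiff ℝ (⊤ : ℕ∞) (vfLie X Y) :=
  ((hY.fderiv_right (by simp)).clm_apply hX).sub ((hX.fderiv_right (by simp)).clm_apply hY)

lemma contDiff_Xgamma {n : ℕ} (X : Fin n → VF N) (hX : ∀ k, ContDiff ℝ (⊤ : ℕ∞) (X k)) :
    ∀ l : List (Fin n), ContDiff ℝ (⊤ : ℕ∞) (Xgamma X l)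
  | [] => by
      have : Xgamma X [] = fun _ => (0 : Fin N → ℝ) := rfl
      rw [this]; exact contDiff_const
  | [k] => hX k
  | k :: l :: rest => contDiff_vfLie (hX k) (contDiff_Xgamma X hX (l :: rest))

/-- Iterated application of the vector fields `Z i` along a list. -/
def Zit {I : Type*} (Z : I → VF N) : List I → ((Fin N → ℝ) → ℝ) → ((Fin N → ℝ) → ℝ)
  | [], f => f
  | a :: l, f => vfD (Z a) (Zit Z l f)

lemma contDiff_Zit {I : Type*} (Z : I → VF N) (hZ : ∀ i, ContDiff ℝ (⊤ : ℕ∞) (Z i)) :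
    ∀ (l : List I) (f : (Fin N → ℝ) → ℝ), ContDiff ℝ (⊤ : ℕ∞) f → ContDiff ℝ (⊤ : ℕ∞) (Zit Z l f)
  | [], f, hf => hf
  | a :: l, f, hf => contDiff_vfD (hZ a) (contDiff_Zit Z hZ l f hf)

/-- Iterated derivative along a vector field. -/
def vfDiter (Y : VF N) (f : (Fin N → ℝ) → ℝ) : ℕ → ((Fin N → ℝ) → ℝ)
  | 0 => f
  | m + 1 => vfD Y (vfDiter Y f m)

lemma contDiff_vfDiter {Y : VF N} {f : (Fin N → ℝ) → ℝ} (hY : ContDiff ℝ (⊤ : ℕ∞) Y)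
    (hf : ContDiff ℝ (⊤ : ℕ∞) f) : ∀ m, ContDiff ℝ (⊤ : ℕ∞) (vfDiter Y f m)
  | 0 => hf
  | m + 1 => contDiff_vfD hY (contDiff_vfDiter hY hf m)

lemma vfD_sum {I : Type*} (Y : VF N) (s : Finset I) (c : I → ℝ)
    (h : I → (Fin N → ℝ) → ℝ) (hdiff : ∀ i, Differentiable ℝ (h i)) (x : Fin N → ℝ) :
    vfD Y (fun z => ∑ i ∈ s, c i * h i z) x = ∑ i ∈ s, c i * vfD Y (h i) x := by
  unfold vfD
  rw [fderiv_fun_sum (fun i _ => ((hdiff i).const_mul (c i)).differentiableAt)]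
  rw [ContinuousLinearMap.sum_apply]
  refine Finset.sum_congr rfl fun i _ => ?_
  rw [fderiv_const_mul ((hdiff i).differentiableAt)]
  simp

lemma vfD_field_sum {I : Type*} [Fintype I] (Z : I → VF N) (y : I → ℝ)
    (g : (Fin N → ℝ) → ℝ) (x : Fin N → ℝ) :
    vfD (fun pt => ∑ i, y i • Z i pt) g x = ∑ i, y i * vfD (Z i) g x := by
  unfold vfD
  rw [map_sum]
  refine Finset.sum_congr rfl fun i _ => ?_
  rw [ContinuousLinearMap.map_smul]
  simp

lemma vfDiter_expand {I : Type*} [Fintype I] [DecidableEq I] (Z : I → VF N)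
    (hZ : ∀ i, ContDiff ℝ (⊤ : ℕ∞) (Z i)) (y : I → ℝ) (f : (Fin N → ℝ) → ℝ)
    (hf : ContDiff ℝ (⊤ : ℕ∞) f) :
    ∀ m, vfDiter (fun pt => ∑ i, y i • Z i pt) f m
      = fun x => ∑ ι : Fin m → I, (∏ t, y (ι t)) * Zit Z (List.ofFn ι) f x := by
  intro m
  induction m with
  | zero =>
      funext x
      have key : ∀ ι : Fin 0 → I, (∏ t, y (ι t)) * Zit Z (List.ofFn ι) f x = f x := by
        intro ι
        have h1 : List.ofFn ι = [] := by simp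
        rw [h1]
        simp [Zit]
      rw [Finset.sum_congr rfl (fun ι _ => key ι), Finset.sum_const]
      simp [vfDiter]
  | succ m ih =>
      funext x
      show vfD _ (vfDiter _ f m) x = _
      rw [vfD_field_sum, Finset.sum_congr rfl (fun i _ => by
        rw [ih, vfD_sum _ _ _ _ (fun ι => (contDiff_Zit Z hZ _ f hf).differentiable (by simp)) x])]
      rw [← Equiv.sum_comp (Fin.consEquiv (fun _ : Fin (m+1) => I))
        (fun ι => (∏ t, y (ι t)) * Zit Z (List.ofFn ι) f x)]
      rw [Fintype.sum_prod_type]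
      refine Finset.sum_congr rfl fun i _ => ?_
      rw [Finset.mul_sum]
      refine Finset.sum_congr rfl fun ι _ => ?_
      have h1 : (Fin.consEquiv (fun _ : Fin (m+1) => I)) (i, ι) = Fin.cons i ι := rfl
      rw [h1]
      have h2 : List.ofFn (Fin.cons i ι : Fin (m+1) → I) = i :: List.ofFn ι := by
        rw [List.ofFn_succ]
        simp
      rw [h2, Fin.prod_univ_succ]
      simp only [Fin.cons_zero, Fin.cons_succ]
      show y i * ((∏ t, y (ι t)) * vfD (Z i) (Zit Z (List.ofFn ι) f) x)
        = (y i * ∏ t, y (ι t)) * vfD (Z i) (Zit Z (List.ofFn ι) f) x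
      ring

end helpers
lemma taylor_flow {N : ℕ} {Y : VF N} (hY : ContDiff ℝ (⊤ : ℕ∞) Y) {f : (Fin N → ℝ) → ℝ}
    (hf : ContDiff ℝ (⊤ : ℕ∞) f) {γ : ℝ → Fin N → ℝ}
    (hγ : ∀ t ∈ Set.Icc (0:ℝ) 1, HasDerivAt γ (Y (γ t)) t)
    (r : ℕ) {M : ℝ} (hM : ∀ t ∈ Set.Icc (0:ℝ) 1, |vfDiter Y f (r+1) (γ t)| ≤ M) :
    |f (γ 1) - ∑ m ∈ Finset.range (r+1), vfDiter Y f m (γ 0) / (Nat.factorial m)| ≤ M := by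
  set g : ℝ → ℝ := fun t => ∑ m ∈ Finset.range (r+1), vfDiter Y f m (γ t) * (1-t)^m / (Nat.factorial m)
    with hg
  -- derivative of g
  have hgd : ∀ t ∈ Set.Icc (0:ℝ) 1,
      HasDerivAt g (vfDiter Y f (r+1) (γ t) * (1-t)^r / (Nat.factorial r)) t := by
    intro t ht
    have hterm : ∀ m ∈ Finset.range (r+1),
        HasDerivAt (fun s => vfDiter Y f m (γ s) * (1-s)^m / (Nat.factorial m))
          ((vfDiter Y f (m+1) (γ t) * (1-t)^m
            + vfDiter Y f m (γ t) * ((m : ℝ) * (1-t)^(m-1) * (-1))) / (Nat.factorial m)) t := by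
      intro m _
      have h1 : HasDerivAt (fun s => vfDiter Y f m (γ s)) (vfDiter Y f (m+1) (γ t)) t := by
        have hFd := (((contDiff_vfDiter hY hf m).differentiable (by simp)) (γ t)).hasFDerivAt
        exact hFd.comp_hasDerivAt t (hγ t ht)
      have h2 : HasDerivAt (fun s : ℝ => (1-s)^m) ((m : ℝ) * (1-t)^(m-1) * (-1)) t := by
        have h3 : HasDerivAt (fun s : ℝ => 1 - s) (-1) t := by
          simpa using (hasDerivAt_id t).const_sub 1
        exact h3.pow m
      exact (h1.mul h2).div_const _
    have hsum := HasDerivAt.fun_sum hterm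
    have key : ∑ m ∈ Finset.range (r+1),
        ((vfDiter Y f (m+1) (γ t) * (1-t)^m
          + vfDiter Y f m (γ t) * ((m : ℝ) * (1-t)^(m-1) * (-1))) / (Nat.factorial m))
        = vfDiter Y f (r+1) (γ t) * (1-t)^r / (Nat.factorial r) := by
      have hsplit : ∀ m : ℕ,
          (vfDiter Y f (m+1) (γ t) * (1-t)^m
            + vfDiter Y f m (γ t) * ((m : ℝ) * (1-t)^(m-1) * (-1))) / (Nat.factorial m)
          = vfDiter Y f (m+1) (γ t) * (1-t)^m / (Nat.factorial m)
            - vfDiter Y f m (γ t) * ((m : ℝ) * (1-t)^(m-1)) / (Nat.factorial m) := by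
        intro m; ring
      rw [Finset.sum_congr rfl fun m _ => hsplit m, Finset.sum_sub_distrib]
      have hB : ∑ m ∈ Finset.range (r+1),
          vfDiter Y f m (γ t) * ((m : ℝ) * (1-t)^(m-1)) / (Nat.factorial m)
          = ∑ m ∈ Finset.range r, vfDiter Y f (m+1) (γ t) * (1-t)^m / (Nat.factorial m) := by
        rw [Finset.sum_range_succ']
        simp only [Nat.cast_zero, zero_mul, mul_zero, zero_div, add_zero]
        refine Finset.sum_congr rfl fun m _ => ?_
        have : ((m+1 : ℕ) : ℝ) ≠ 0 := by positivity
        rw [Nat.add_sub_cancel, Nat.factorial_succ]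
        push_cast
        field_simp
      rw [hB, Finset.sum_range_succ]
      ring
    rw [← key]
    exact hsum
  -- MVT bound
  have hMnonneg : 0 ≤ M := le_trans (abs_nonneg _) (hM 0 ⟨le_refl _, zero_le_one⟩)
  have hbound : ∀ t ∈ Set.Icc (0:ℝ) 1,
      ‖vfDiter Y f (r+1) (γ t) * (1-t)^r / (Nat.factorial r)‖ ≤ M := by
    intro t ht
    rw [Real.norm_eq_abs, abs_div, abs_mul]
    have h1 : |(1-t)^r| ≤ 1 := by
      rw [abs_pow]
      apply pow_le_one₀ (abs_nonneg _)
      rw [abs_le]; constructor <;> [linarith [ht.2]; linarith [ht.1]]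
    have h2 : (1:ℝ) ≤ |((Nat.factorial r) : ℝ)| := by
      rw [abs_of_nonneg (by positivity)]
      exact_mod_cast Nat.one_le_iff_ne_zero.mpr (Nat.factorial_ne_zero r)
    calc |vfDiter Y f (r+1) (γ t)| * |(1-t)^r| / |((Nat.factorial r) : ℝ)|
        ≤ M * 1 / 1 := by
          apply div_le_div₀ (by positivity) _ one_pos h2
          exact mul_le_mul (hM t ht) h1 (abs_nonneg _) hMnonneg
      _ = M := by ring
  have hmvt := Convex.norm_image_sub_le_of_norm_hasDerivWithin_le
    (fun t ht => (hgd t ht).hasDerivWithinAt) hbound (convex_Icc (0:ℝ) 1)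
    (Set.left_mem_Icc.mpr zero_le_one) (Set.right_mem_Icc.mpr zero_le_one)
  have hg1 : g 1 = f (γ 1) := by
    simp only [hg]
    rw [Finset.sum_eq_single 0]
    · simp [vfDiter]
    · intro m _ hm
      simp [zero_pow hm]
    · intro h; exact absurd (Finset.mem_range.mpr (Nat.succ_pos r)) h
  have hg0 : g 0 = ∑ m ∈ Finset.range (r+1), vfDiter Y f m (γ 0) / (Nat.factorial m) := by
    simp only [hg]
    refine Finset.sum_congr rfl fun m _ => ?_
    simp
  calc |f (γ 1) - ∑ m ∈ Finset.range (r+1), vfDiter Y f m (γ 0) / (Nat.factorial m)|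
      = ‖g 1 - g 0‖ := by rw [hg1, hg0, Real.norm_eq_abs]
    _ ≤ M * ‖(1:ℝ) - 0‖ := hmvt
    _ = M := by simp

lemma stay_in_ball {N : ℕ} {Y : VF N} {γ : ℝ → Fin N → ℝ}
    (hγ : ∀ t ∈ Set.Icc (0:ℝ) 1, HasDerivAt γ (Y (γ t)) t)
    {ρ δ : ℝ} (hρ : 0 < ρ) (hδ : 0 ≤ δ)
    (hY : ∀ x : Fin N → ℝ, ‖x‖ ≤ ρ → ‖Y x‖ ≤ δ)
    (hξ : ‖γ 0‖ < ρ/8) (hδρ : δ ≤ ρ/8) :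
    ∀ t ∈ Set.Icc (0:ℝ) 1, ‖γ t‖ ≤ ρ/2 := by
  by_contra hcon
  push_neg at hcon
  obtain ⟨t₀, ht₀, ht₀n⟩ := hcon
  set E : Set ℝ := {t ∈ Set.Icc (0:ℝ) 1 | ρ/2 < ‖γ t‖} with hE
  have hEne : E.Nonempty := ⟨t₀, ht₀, ht₀n⟩
  have hEbdd : BddBelow E := ⟨0, fun t ht => ht.1.1⟩
  set T := sInf E with hT
  have hT0 : 0 ≤ T := le_csInf hEne fun t ht => ht.1.1
  have hT1 : T ≤ 1 := le_trans (csInf_le hEbdd ⟨ht₀, ht₀n⟩) ht₀.2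
  have hTIcc : T ∈ Set.Icc (0:ℝ) 1 := ⟨hT0, hT1⟩
  have hclos : T ∈ closure E := csInf_mem_closure hEne hEbdd
  have hcontT : ContinuousAt (fun t => ‖γ t‖) T := ((hγ T hTIcc).continuousAt).norm
  have hTlow : ρ/2 ≤ ‖γ T‖ := by
    haveI hne : (𝓝[E] T).NeBot := mem_closure_iff_nhdsWithin_neBot.mp hclos
    refine ge_of_tendsto ((hcontT.continuousWithinAt (s := E)).tendsto) ?_
    exact eventually_nhdsWithin_of_forall fun t ht => le_of_lt ht.2
  have hsmall : ∀ s, 0 ≤ s → s < T → ‖γ s‖ ≤ ρ/2 := by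
    intro s hs0 hsT
    by_contra hs
    push_neg at hs
    have hsE : s ∈ E := ⟨⟨hs0, le_trans (le_of_lt hsT) hT1⟩, hs⟩
    exact absurd (csInf_le hEbdd hsE) (not_le.mpr hsT)
  have hT2 : ‖γ T‖ ≤ ρ := by
    rcases eq_or_lt_of_le hT0 with h0 | h0
    · rw [← h0]; linarith
    · have hclosI : T ∈ closure (Set.Ico (0:ℝ) T) := by
        rw [closure_Ico (ne_of_lt h0)]
        exact ⟨hT0, le_refl T⟩
      haveI hne : (𝓝[Set.Ico (0:ℝ) T] T).NeBot := mem_closure_iff_nhdsWithin_neBot.mp hclosI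
      have : ‖γ T‖ ≤ ρ/2 := by
        refine le_of_tendsto ((hcontT.continuousWithinAt (s := Set.Ico (0:ℝ) T)).tendsto) ?_
        exact eventually_nhdsWithin_of_forall fun s hs => hsmall s hs.1 hs.2
      linarith
  -- MVT on [0, T]
  have hmvt : ‖γ T - γ 0‖ ≤ δ * ‖T - 0‖ := by
    apply Convex.norm_image_sub_le_of_norm_hasDerivWithin_le
      (f' := fun s => Y (γ s)) ?_ ?_ (convex_Icc (0:ℝ) T)
      (Set.left_mem_Icc.mpr hT0) (Set.right_mem_Icc.mpr hT0)
    · intro s hs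
      exact ((hγ s ⟨hs.1, le_trans hs.2 hT1⟩)).hasDerivWithinAt
    · intro s hs
      apply hY
      rcases eq_or_lt_of_le hs.2 with h | h
      · rw [h]; exact hT2
      · linarith [hsmall s hs.1 h]
  have : ‖γ T‖ ≤ ‖γ 0‖ + δ * ‖T - 0‖ := by
    calc ‖γ T‖ = ‖γ 0 + (γ T - γ 0)‖ := by ring_nf
      _ ≤ ‖γ 0‖ + ‖γ T - γ 0‖ := norm_add_le _ _
      _ ≤ ‖γ 0‖ + δ * ‖T - 0‖ := by linarith
  have hTn : ‖T - 0‖ ≤ 1 := by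
    rw [sub_zero, Real.norm_eq_abs, abs_of_nonneg hT0]; exact hT1
  nlinarith [norm_nonneg (T - (0:ℝ)), mul_le_mul_of_nonneg_left hTn hδ]

/-- number of occurrences of `i'` in the tuple `ι` -/
def cntF {I : Type*} [DecidableEq I] {q : ℕ} (ι : Fin q → I) (i' : I) : ℕ :=
  (Finset.univ.filter (fun t => ι t = i')).card

lemma prod_eq_prod_cnt {I : Type*} [Fintype I] [DecidableEq I] {q : ℕ}
    (ι : Fin q → I) (y : I → ℝ) :
    ∏ t, y (ι t) = ∏ i', y i' ^ (cntF ι i') := by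
  rw [← Finset.prod_fiberwise_of_maps_to (g := ι) (fun t _ => Finset.mem_univ (ι t))
    (fun t => y (ι t))]
  refine Finset.prod_congr rfl fun i' _ => ?_
  have h1 : ∀ t ∈ Finset.univ.filter (fun t => ι t = i'), y (ι t) = y i' :=
    fun t ht => by rw [(Finset.mem_filter.mp ht).2]
  rw [Finset.prod_congr rfl h1, Finset.prod_const]
  rfl

lemma cntF_sum {I : Type*} [Fintype I] [DecidableEq I] {q : ℕ} (ι : Fin q → I) :
    ∑ i', cntF ι i' = q := by
  have := Finset.card_eq_sum_card_fiberwise (f := ι)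
    (fun t (_ : t ∈ (Finset.univ : Finset (Fin q))) => Finset.mem_univ (ι t))
  simpa [cntF] using this.symm

lemma cntF_le {I : Type*} [Fintype I] [DecidableEq I] {q : ℕ} (ι : Fin q → I) (i' : I) :
    cntF ι i' ≤ q := by
  calc cntF ι i' ≤ (Finset.univ : Finset (Fin q)).card := Finset.card_filter_le _ _
    _ = q := by simp

open Fin.NatCast in
lemma comb_regroup {I : Type*} [Fintype I] [DecidableEq I] {r q : ℕ}
    (hq1 : 1 ≤ q) (hqr : q ≤ r) (F : (Fin q → I) → ℝ) (y : I → ℝ) :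
    ∑ α ∈ Finset.univ.filter
        (fun α : I → Fin (r + 1) => 1 ≤ ∑ i', (α i' : ℕ) ∧ ∑ i', (α i' : ℕ) ≤ r),
      (∑ ι ∈ Finset.univ.filter
          (fun ι : Fin q → I => ∀ i', (α i' : ℕ) = cntF ι i'), F ι)
        * ∏ i', y i' ^ (α i' : ℕ)
    = ∑ ι : Fin q → I, F ι * ∏ t, y (ι t) := by
  have hcast : ∀ (ι : Fin q → I) (i' : I), ((cntF ι i' : Fin (r+1)) : ℕ) = cntF ι i' :=
    fun ι i' => Fin.val_cast_of_lt
      (lt_of_le_of_lt (le_trans (cntF_le ι i') hqr) (Nat.lt_succ_self r))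
  have henc : ∀ (ι : Fin q → I) (α : I → Fin (r+1)),
      ((fun i' => (cntF ι i' : Fin (r+1))) = α) ↔ (∀ i', (α i' : ℕ) = cntF ι i') := by
    intro ι α
    constructor
    · intro h i'; rw [← h]; exact hcast ι i'
    · intro h
      funext i'
      exact Fin.ext (by rw [hcast ι i', h i'])
  have hmaps : ∀ ι ∈ (Finset.univ : Finset (Fin q → I)),
      (fun i' => (cntF ι i' : Fin (r+1))) ∈ Finset.univ.filter
        (fun α : I → Fin (r + 1) => 1 ≤ ∑ i', (α i' : ℕ) ∧ ∑ i', (α i' : ℕ) ≤ r) := by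
    intro ι _
    rw [Finset.mem_filter]
    refine ⟨Finset.mem_univ _, ?_, ?_⟩
    · rw [Finset.sum_congr rfl (fun i' _ => hcast ι i'), cntF_sum]; exact hq1
    · rw [Finset.sum_congr rfl (fun i' _ => hcast ι i'), cntF_sum]; exact hqr
  rw [← Finset.sum_fiberwise_of_maps_to hmaps (fun ι => F ι * ∏ t, y (ι t))]
  refine Finset.sum_congr rfl fun α hα => ?_
  have hfe : Finset.univ.filter
        (fun ι : Fin q → I => (fun i' => (cntF ι i' : Fin (r+1))) = α)
      = Finset.univ.filter (fun ι : Fin q → I => ∀ i', (α i' : ℕ) = cntF ι i') :=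
    Finset.filter_congr (fun ι _ => by simpa using henc ι α)
  rw [hfe, Finset.sum_mul]
  refine Finset.sum_congr rfl fun ι hι => ?_
  have hc := (Finset.mem_filter.mp hι).2
  rw [prod_eq_prod_cnt ι y]
  congr 1
  exact Finset.prod_congr rfl fun i' _ => by rw [hc i']

lemma abs_le_anorm_pow {ι : Type*} [Fintype ι] [Nonempty ι] (w : ι → ℕ)
    (hw : ∀ i, 1 ≤ w i) (y : ι → ℝ) (i : ι) :
    |y i| ≤ anorm w y ^ (w i) := by
  have hb : BddAbove (Set.range fun i => |y i| ^ ((w i : ℝ)⁻¹)) :=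
    (Set.finite_range _).bddAbove
  have h1 : |y i| ^ ((w i : ℝ)⁻¹) ≤ anorm w y := le_ciSup hb i
  have h0 : (0:ℝ) ≤ |y i| ^ ((w i : ℝ)⁻¹) := Real.rpow_nonneg (abs_nonneg _) _
  have hwne : ((w i : ℝ)) ≠ 0 := by
    have := hw i; positivity
  calc |y i| = (|y i| ^ ((w i : ℝ)⁻¹)) ^ (w i) := by
        rw [← Real.rpow_natCast (|y i| ^ ((w i : ℝ)⁻¹)) (w i), ← Real.rpow_mul (abs_nonneg _),
          inv_mul_cancel₀ hwne, Real.rpow_one]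
    _ ≤ anorm w y ^ (w i) := pow_le_pow_left₀ h0 h1 _

lemma anorm_nonneg {ι : Type*} [Fintype ι] [Nonempty ι] (w : ι → ℕ) (y : ι → ℝ) :
    0 ≤ anorm w y := by
  have hb : BddAbove (Set.range fun i => |y i| ^ ((w i : ℝ)⁻¹)) :=
    (Set.finite_range _).bddAbove
  obtain ⟨i⟩ := (inferInstance : Nonempty ι)
  exact le_trans (Real.rpow_nonneg (abs_nonneg _) _) (le_ciSup hb i)
set_option maxHeartbeats 1000000 in
/-- the Taylor expansion (2.10) of the paper: the normal coordinates of
`exp(y·X)ξ` equal `ξ_{jk} + Σ_{1 ≤ |α| ≤ r} a_{jk,α}(ξ) y^α` up to an error `O(|y|^{r+1})`.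
The lifted space `ℝ^Ñ` has coordinates indexed by `Fin N ⊕ κ`; multi-indices `α` of
ordinary degree `≤ r` are encoded as functions `(Fin N ⊕ κ) → Fin (r+1)`;
`expMap y ξ = exp(y·X)ξ`, and `W` is the normal coordinate neighborhood. -/
theorem normal_coordinate_expansion
    {N n r : ℕ} (hN : 1 ≤ N) (hn : 0 < n) (hr : 1 ≤ r)
    (X : Fin n → VF N) (hX : ∀ k, ContDiff ℝ (⊤ : ℕ∞) (X k))
    (hHorm : Vj X r 0 = ⊤)
    {κ : Type} [Fintype κ] [DecidableEq κ]
    (w : Fin N ⊕ κ → ℕ) (Z : Fin N ⊕ κ → VF N)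
    (hw : ∀ i, 1 ≤ w i ∧ w i ≤ r)
    (hZ : ∀ i, ∃ γ : List (Fin n), γ.length = w i ∧ Z i = Xgamma X γ)
    (hZlin : LinearIndependent ℝ (fun i : Fin N => Z (Sum.inl i) 0))
    (hZspan : ∀ j₀, 1 ≤ j₀ → j₀ ≤ r →
      Submodule.span ℝ {v | ∃ i : Fin N, w (Sum.inl i) ≤ j₀ ∧ Z (Sum.inl i) 0 = v} =
        Vj X j₀ 0)
    (W : Set (Fin N → ℝ)) (hW : W ∈ 𝓝 (0 : Fin N → ℝ))
    (hnormal : ∀ x ∈ W, ExpEq (fun p => ∑ i : Fin N, x i • Z (Sum.inl i) p)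
      (0 : Fin N → ℝ) x)
    (expMap : ((Fin N ⊕ κ) → ℝ) → (Fin N → ℝ) → (Fin N → ℝ))
    (hexp : ∀ y ξ, ExpEq (fun pt => ∑ i, y i • Z i pt) ξ (expMap y ξ)) :
    ∃ U₁ ∈ 𝓝 (0 : Fin N → ℝ), ∃ ε : ℝ, 0 < ε ∧ ∃ C : ℝ, 0 < C ∧
      ∃ a : Fin N → ((Fin N ⊕ κ) → Fin (r + 1)) → (Fin N → ℝ) → ℝ,
        (∀ i α, ContDiffOn ℝ (⊤ : ℕ∞) (a i α) U₁) ∧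
        ∀ ξ ∈ U₁, ∀ y : (Fin N ⊕ κ) → ℝ, anorm w y < ε →
          expMap y ξ ∈ W ∧
          ∀ i : Fin N,
            |expMap y ξ i - ξ i -
                ∑ α ∈ Finset.univ.filter
                    (fun α : (Fin N ⊕ κ) → Fin (r + 1) =>
                      1 ≤ ∑ i', (α i' : ℕ) ∧ ∑ i', (α i' : ℕ) ≤ r),
                  a i α ξ * ∏ i', y i' ^ (α i' : ℕ)| ≤
              C * anorm w y ^ (r + 1) := by
  classical
  haveI : Nonempty (Fin N ⊕ κ) := ⟨Sum.inl ⟨0, hN⟩⟩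
  -- smoothness of the Z i
  have hZsm : ∀ i : (Fin N ⊕ κ), ContDiff ℝ (⊤ : ℕ∞) (Z i) := by
    intro i
    obtain ⟨γl, _, hzi⟩ := hZ i
    rw [hzi]
    exact contDiff_Xgamma X hX γl
  have hcoord : ∀ i : Fin N, ContDiff ℝ (⊤ : ℕ∞) (fun x : Fin N → ℝ => x i) :=
    fun i => (ContinuousLinearMap.proj (R := ℝ) (φ := fun _ : Fin N => ℝ) i).contDiff
  -- radius ρ with closedBall 0 ρ ⊆ W
  obtain ⟨ρ₀, hρ₀pos, hρ₀sub⟩ := Metric.mem_nhds_iff.mp hW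
  set ρ := ρ₀ / 2 with hρdef
  have hρpos : 0 < ρ := by positivity
  have hcbW : Metric.closedBall (0 : Fin N → ℝ) ρ ⊆ W := by
    refine le_trans ?_ hρ₀sub
    intro x hx
    rw [Metric.mem_closedBall] at hx
    rw [Metric.mem_ball]
    linarith
  -- bound M0 for the fields on the closed ball
  have hcontM : ContinuousOn (fun x : Fin N → ℝ => ∑ i : (Fin N ⊕ κ), ‖Z i x‖)
      (Metric.closedBall (0 : Fin N → ℝ) ρ) :=
    (continuous_finset_sum _ fun i _ => ((hZsm i).continuous).norm).continuousOn
  obtain ⟨M0', hM0'⟩ := (isCompact_closedBall (0 : Fin N → ℝ) ρ).exists_bound_of_continuousOn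
    hcontM
  set M0 := max M0' 0 with hM0def
  have hM0nn : 0 ≤ M0 := le_max_right _ _
  have hM0 : ∀ x ∈ Metric.closedBall (0 : Fin N → ℝ) ρ, ∑ i : (Fin N ⊕ κ), ‖Z i x‖ ≤ M0 := by
    intro x hx
    refine le_trans (le_abs_self _) (le_trans ?_ (le_max_left _ _))
    exact hM0' x hx
  -- bound K for iterated derivatives of the coordinate functions on the closed ball
  have hcontK : ContinuousOn (fun x : Fin N → ℝ =>
      ∑ i : Fin N, ∑ ι : Fin (r+1) → (Fin N ⊕ κ), |Zit Z (List.ofFn ι) (fun z => z i) x|)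
      (Metric.closedBall (0 : Fin N → ℝ) ρ) := by
    refine (continuous_finset_sum _ fun i _ => continuous_finset_sum _ fun ι _ => ?_).continuousOn
    exact ((contDiff_Zit Z hZsm _ _ (hcoord i)).continuous).abs
  obtain ⟨K', hK'⟩ := (isCompact_closedBall (0 : Fin N → ℝ) ρ).exists_bound_of_continuousOn
    hcontK
  set K := max K' 0 with hKdef
  have hKnn : 0 ≤ K := le_max_right _ _
  have hK : ∀ x ∈ Metric.closedBall (0 : Fin N → ℝ) ρ,
      ∑ i : Fin N, ∑ ι : Fin (r+1) → (Fin N ⊕ κ), |Zit Z (List.ofFn ι) (fun z => z i) x| ≤ K := by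
    intro x hx
    refine le_trans (le_abs_self _) (le_trans ?_ (le_max_left _ _))
    exact hK' x hx
  -- choices
  refine ⟨Metric.ball 0 (ρ/8), Metric.ball_mem_nhds 0 (by positivity),
    min 1 (ρ/(8*(M0+1))), lt_min one_pos (by positivity), K + 1, by positivity,
    fun i α ξ => ∑ m ∈ Finset.range r, (1/((Nat.factorial (m+1) : ℕ) : ℝ)) *
      ∑ ι ∈ Finset.univ.filter
        (fun ι : Fin (m+1) → (Fin N ⊕ κ) => ∀ i', (α i' : ℕ) = cntF ι i'),
        Zit Z (List.ofFn ι) (fun z => z i) ξ, ?_, ?_⟩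
  · -- smoothness of the coefficients
    intro i α
    refine ContDiff.contDiffOn ?_
    refine ContDiff.sum fun m _ => ?_
    exact contDiff_const.mul (ContDiff.sum fun ι _ => contDiff_Zit Z hZsm _ _ (hcoord i))
  · -- the main estimate
    intro ξ hξ y hy
    have hanN : 0 ≤ anorm w y := anorm_nonneg w y
    have han1 : anorm w y ≤ 1 := le_of_lt (lt_of_lt_of_le hy (min_le_left _ _))
    have hanρ : anorm w y ≤ ρ/(8*(M0+1)) := le_of_lt (lt_of_lt_of_le hy (min_le_right _ _))
    have hyi : ∀ i : (Fin N ⊕ κ), |y i| ≤ anorm w y := by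
      intro i
      refine le_trans (abs_le_anorm_pow w (fun i => (hw i).1) y i) ?_
      exact pow_le_of_le_one hanN han1 (by have := (hw i).1; omega)
    -- the flow curve
    obtain ⟨γ, hγ0, hγ1, hγd⟩ := hexp y ξ
    set Yy : VF N := fun pt => ∑ i : (Fin N ⊕ κ), y i • Z i pt with hYydef
    have hYysm : ContDiff ℝ (⊤ : ℕ∞) Yy :=
      ContDiff.sum fun i _ => (hZsm i).const_smul (y i)
    -- the field is small on the closed ball
    have hYb : ∀ x : Fin N → ℝ, ‖x‖ ≤ ρ → ‖Yy x‖ ≤ ρ/8 := by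
      intro x hx
      have h1 : ‖Yy x‖ ≤ ∑ i : (Fin N ⊕ κ), ‖y i • Z i x‖ := norm_sum_le _ _
      have h2 : ∑ i : (Fin N ⊕ κ), ‖y i • Z i x‖ ≤ ∑ i : (Fin N ⊕ κ), anorm w y * ‖Z i x‖ := by
        refine Finset.sum_le_sum fun i _ => ?_
        rw [norm_smul, Real.norm_eq_abs]
        exact mul_le_mul_of_nonneg_right (hyi i) (norm_nonneg _)
      have h3 : ∑ i : (Fin N ⊕ κ), anorm w y * ‖Z i x‖ = anorm w y * ∑ i : (Fin N ⊕ κ), ‖Z i x‖ :=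
        (Finset.mul_sum _ _ _).symm
      have h4 : ∑ i : (Fin N ⊕ κ), ‖Z i x‖ ≤ M0 := hM0 x (by rwa [Metric.mem_closedBall, dist_zero_right])
      have h5 : anorm w y * ∑ i : (Fin N ⊕ κ), ‖Z i x‖ ≤ (ρ/(8*(M0+1))) * M0 := by
        refine mul_le_mul hanρ h4 ?_ (by positivity)
        exact Finset.sum_nonneg fun i _ => norm_nonneg _
      have h6 : (ρ/(8*(M0+1))) * M0 ≤ ρ/8 := by
        rw [div_mul_eq_mul_div, div_le_div_iff₀ (by positivity) (by norm_num)]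
        nlinarith
      linarith
    have hξρ : ‖ξ‖ < ρ/8 := by
      rw [Metric.mem_ball, dist_zero_right] at hξ
      exact hξ
    have hstay : ∀ t ∈ Set.Icc (0:ℝ) 1, ‖γ t‖ ≤ ρ/2 :=
      stay_in_ball hγd hρpos (by positivity) hYb (by rwa [hγ0]) (le_refl _)
    have hγcb : ∀ t ∈ Set.Icc (0:ℝ) 1, γ t ∈ Metric.closedBall (0 : Fin N → ℝ) ρ := by
      intro t ht
      rw [Metric.mem_closedBall, dist_zero_right]
      linarith [hstay t ht]
    constructor
    · -- expMap y ξ ∈ W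
      rw [← hγ1]
      exact hcbW (hγcb 1 ⟨zero_le_one, le_refl _⟩)
    · intro i
      -- bound on the (r+1)-st iterated derivative along the curve
      have hMbd : ∀ t ∈ Set.Icc (0:ℝ) 1,
          |vfDiter Yy (fun z => z i) (r+1) (γ t)| ≤ K * anorm w y ^ (r+1) := by
        intro t ht
        rw [vfDiter_expand Z hZsm y _ (hcoord i) (r+1)]
        refine le_trans (Finset.abs_sum_le_sum_abs _ _) ?_
        have hterm : ∀ ι : Fin (r+1) → (Fin N ⊕ κ),
            |(∏ t', y (ι t')) * Zit Z (List.ofFn ι) (fun z => z i) (γ t)|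
            ≤ anorm w y ^ (r+1) * |Zit Z (List.ofFn ι) (fun z => z i) (γ t)| := by
          intro ι
          rw [abs_mul]
          refine mul_le_mul_of_nonneg_right ?_ (abs_nonneg _)
          rw [Finset.abs_prod]
          calc ∏ t', |y (ι t')| ≤ ∏ _t' : Fin (r+1), anorm w y :=
                Finset.prod_le_prod (fun _ _ => abs_nonneg _) (fun t' _ => hyi (ι t'))
            _ = anorm w y ^ (r+1) := by
              rw [Finset.prod_const, Finset.card_univ, Fintype.card_fin]
        refine le_trans (Finset.sum_le_sum fun ι _ => hterm ι) ?_
        rw [← Finset.mul_sum, mul_comm K (anorm w y ^ (r+1))]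
        refine mul_le_mul_of_nonneg_left ?_ (pow_nonneg hanN (r+1))
        refine le_trans ?_ (hK (γ t) (hγcb t ht))
        refine Finset.single_le_sum (f := fun i : Fin N =>
          ∑ ι : Fin (r+1) → (Fin N ⊕ κ), |Zit Z (List.ofFn ι) (fun z => z i) (γ t)|)
          (fun j _ => Finset.sum_nonneg fun ι _ => abs_nonneg _) (Finset.mem_univ i)
      have htay := taylor_flow hYysm (hcoord i) hγd r hMbd
      -- identify the Taylor polynomial with the coefficient sum
      have hpoly : ∑ m ∈ Finset.range (r+1), vfDiter Yy (fun z => z i) m (γ 0)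
            / ((Nat.factorial m : ℕ) : ℝ)
          = ξ i + ∑ α ∈ Finset.univ.filter
              (fun α : (Fin N ⊕ κ) → Fin (r + 1) =>
                1 ≤ ∑ i', (α i' : ℕ) ∧ ∑ i', (α i' : ℕ) ≤ r),
              (∑ m ∈ Finset.range r, (1/((Nat.factorial (m+1) : ℕ) : ℝ)) *
                ∑ ι ∈ Finset.univ.filter
                  (fun ι : Fin (m+1) → (Fin N ⊕ κ) => ∀ i', (α i' : ℕ) = cntF ι i'),
                  Zit Z (List.ofFn ι) (fun z => z i) ξ)
                * ∏ i', y i' ^ (α i' : ℕ) := by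
        rw [Finset.sum_range_succ']
        have hz : vfDiter Yy (fun z => z i) 0 (γ 0) / ((Nat.factorial 0 : ℕ) : ℝ) = ξ i := by
          rw [hγ0]; simp [vfDiter]
        rw [hz, add_comm]
        congr 1
        -- swap the sums
        rw [Finset.sum_congr rfl (fun α _ => Finset.sum_mul _ _ _), Finset.sum_comm]
        refine Finset.sum_congr rfl fun m hm => ?_
        have hm' := Finset.mem_range.mp hm
        have hcr := comb_regroup  (r := r) (q := m+1) (Nat.le_add_left 1 m)
          (by omega) (fun ι => Zit Z (List.ofFn ι) (fun z => z i) ξ) y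
        refine Eq.symm ?_
        calc ∑ α ∈ Finset.univ.filter
              (fun α : (Fin N ⊕ κ) → Fin (r + 1) =>
                1 ≤ ∑ i', (α i' : ℕ) ∧ ∑ i', (α i' : ℕ) ≤ r),
              ((1/((Nat.factorial (m+1) : ℕ) : ℝ)) *
                ∑ ι ∈ Finset.univ.filter
                  (fun ι : Fin (m+1) → (Fin N ⊕ κ) => ∀ i', (α i' : ℕ) = cntF ι i'),
                  Zit Z (List.ofFn ι) (fun z => z i) ξ)
                * ∏ i', y i' ^ (α i' : ℕ)
            = (1/((Nat.factorial (m+1) : ℕ) : ℝ)) * ∑ α ∈ Finset.univ.filter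
              (fun α : (Fin N ⊕ κ) → Fin (r + 1) =>
                1 ≤ ∑ i', (α i' : ℕ) ∧ ∑ i', (α i' : ℕ) ≤ r),
              (∑ ι ∈ Finset.univ.filter
                  (fun ι : Fin (m+1) → (Fin N ⊕ κ) => ∀ i', (α i' : ℕ) = cntF ι i'),
                  Zit Z (List.ofFn ι) (fun z => z i) ξ)
                * ∏ i', y i' ^ (α i' : ℕ) := by
              rw [Finset.mul_sum]
              exact Finset.sum_congr rfl fun α _ => by ring
          _ = (1/((Nat.factorial (m+1) : ℕ) : ℝ)) *
              ∑ ι : Fin (m+1) → (Fin N ⊕ κ), Zit Z (List.ofFn ι) (fun z => z i) ξ * ∏ t, y (ι t) := by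
              rw [hcr]
          _ = vfDiter Yy (fun z => z i) (m+1) (γ 0) / ((Nat.factorial (m+1) : ℕ) : ℝ) := by
              rw [hγ0, vfDiter_expand Z hZsm y _ (hcoord i) (m+1), Finset.sum_div,
                Finset.mul_sum]
              exact Finset.sum_congr rfl fun ι _ => by ring
      rw [← hγ1]
      calc |γ 1 i - ξ i - ∑ α ∈ Finset.univ.filter
              (fun α : (Fin N ⊕ κ) → Fin (r + 1) =>
                1 ≤ ∑ i', (α i' : ℕ) ∧ ∑ i', (α i' : ℕ) ≤ r),
              (∑ m ∈ Finset.range r, (1/((Nat.factorial (m+1) : ℕ) : ℝ)) *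
                ∑ ι ∈ Finset.univ.filter
                  (fun ι : Fin (m+1) → (Fin N ⊕ κ) => ∀ i', (α i' : ℕ) = cntF ι i'),
                  Zit Z (List.ofFn ι) (fun z => z i) ξ)
                * ∏ i', y i' ^ (α i' : ℕ)|
          = |(fun z => z i) (γ 1) - ∑ m ∈ Finset.range (r+1),
              vfDiter Yy (fun z => z i) m (γ 0) / ((Nat.factorial m : ℕ) : ℝ)| := by
            rw [hpoly, sub_add_eq_sub_sub]
        _ ≤ K * anorm w y ^ (r+1) := htay
        _ ≤ (K + 1) * anorm w y ^ (r+1) := by nlinarith [pow_nonneg hanN (r+1)]
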